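/- Let f : ℝ^{n×m} → ℝ be differentiable with ∇f Lipschitz continuous with modulus L_f (Frobenius norm), λ > 0, μ ≥ 0, and fix ρ₁, ρ₂ ∈ (0,1). Let U^{k−1}, U^k ∈ ℝ^{n×r}, V^{k−1}, V^k ∈ ℝ^{m×r}, β_k ≥ 0, and set Ũ^k = U^k + β_k(U^k − U^{k−1}), Ṽ^k = V^k + β_k(V^k − V^{k−1}). Set τ₁ = L_f‖V^k‖², choose γ₁ > τ₁, and let U^{k+1} globally minimize U ↦ ⟨∇f(Ũ^k(V^k)ᵀ)V^k, U⟩ + (γ₁/2)‖U − Ũ^k‖_F² + (μ/2)‖U‖_F² + λ‖U‖_{2,0}. Set τ₂ = L_f‖U^{k+1}‖², choose γ₂ > τ₂, and let V^{k+1} globally minimize V ↦ ⟨(∇f(U^{k+1}(Ṽ^k)ᵀ))ᵀU^{k+1}, V⟩ + (γ₂/2)‖V − Ṽ^k‖_F² + (μ/2)‖V‖_F² + λ‖V‖_{2,0}. With α₁ = γ₁ − τ₁ and α₂ = γ₂ − τ₂, it holds that [Φ_{λ,μ}(U^{k+1},V^{k+1}) + (ρ₁α₁/2)‖U^{k+1}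 − U^k‖_F² + (ρ₂α₂/2)‖V^{k+1} − V^k‖_F²] − [Φ_{λ,μ}(U^k,V^k) + (ρ₁α₁/2)‖U^k − U^{k−1}‖_F² + (ρ₂α₂/2)‖V^k − V^{k−1}‖_F²] ≤ −[ρ₁α₁/2 − (2(1−ρ₁)τ₁ + α₁)β_k²/(2(1−ρ₁))]·‖U^k − U^{k−1}‖_F² − [ρ₂α₂/2 − (2(1−ρ₂)τ₂ + α₂)β_k²/(2(1−ρ₂))]·‖V^k − V^{k−1}‖_F². -/

import Mathlib

open Filter Topology Matrix

attribute [local instance] Matrix.frobeniusSeminormedAddCommGroup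
  Matrix.frobeniusNormedAddCommGroup Matrix.frobeniusNormedSpace

/-- The Frobenius (trace) inner product `⟨A,B⟩ = trace(AᵀB) = ∑ᵢⱼ Aᵢⱼ Bᵢⱼ` on matrices. -/
noncomputable def frobInner {α β : Type*} [Fintype α] [Fintype β] (A B : Matrix α β ℝ) : ℝ :=
  ∑ i, ∑ j, A i j * B i j

/-- The Frobenius norm of a matrix. -/
noncomputable def frobNorm {α β : Type*} [Fintype α] [Fintype β] (A : Matrix α β ℝ) : ℝ :=
  Real.sqrt (frobInner A A)

/-- The column `ℓ_{2,0}`-norm: the number of nonzero columns. -/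
noncomputable def l20 {α β : Type*} [Fintype α] [Fintype β] (A : Matrix α β ℝ) : ℕ :=
  {j : β | (fun i => A i j) ≠ 0}.ncard

/-- The spectral norm of a matrix. -/
noncomputable def specNorm {m r : ℕ} (V : Matrix (Fin m) (Fin r) ℝ) : ℝ :=
  ‖LinearMap.toContinuousLinearMap (Matrix.toEuclideanLin V)‖

/-- `Φ_{λ,μ}(U,V) = f(UVᵀ) + (μ/2)(‖U‖_F² + ‖V‖_F²) + λ(‖U‖_{2,0} + ‖V‖_{2,0})`. -/
noncomputable def Phi {n m r : ℕ} (f : Matrix (Fin n) (Fin m) ℝ → ℝ) (lam mu : ℝ)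
    (U : Matrix (Fin n) (Fin r) ℝ) (V : Matrix (Fin m) (Fin r) ℝ) : ℝ :=
  f (U * Vᵀ) + mu / 2 * (frobInner U U + frobInner V V) + lam * ((l20 U : ℝ) + (l20 V : ℝ))


/-!
Fixing one factor, the block function `U ↦ f (U Vᵀ)` has gradient `f' (U Vᵀ) V`, and since
`‖W Vᵀ‖_F ≤ ‖V‖ ‖W‖_F` it obeys the descent lemma with constant `τ = L_f ‖V‖²`. Using that
lemma above and below at the extrapolated point `Ũ` and comparing the prox-linear minimizer with
the current iterate gives
`h(U⁺) ≤ h(U) + (τ + γ)/2 ‖U - Ũ‖² - (γ - τ)/2 ‖U⁺ - Ũ‖²` for `h = f(· Vᵀ) + μ/2 ‖·‖² + λ ℓ_{2,0}`.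
Here `U - Ũ = -β (U - U⁻)`, and `ρ ‖a‖² ≤ ‖a - b‖² + ρ/(1-ρ) ‖b‖²` with `a = U⁺ - U`,
`b = β (U - U⁻)` trades `‖U⁺ - Ũ‖²` for `‖U⁺ - U‖²`. The two block inequalities add up.
-/

open WithLp

section Frobenius

variable {α β : Type*} [Fintype α] [Fintype β]

theorem frobenius_norm_eq_norm_toLp (A : Matrix α β ℝ) :
    ‖A‖ = ‖toLp 2 fun i => toLp 2 (A i)‖ :=
  rfl

theorem frobenius_norm_sq_eq_sum_norm_sq_row (A : Matrix α β ℝ) :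
    ‖A‖ ^ 2 = ∑ i, ‖toLp 2 (A i)‖ ^ 2 := by
  rw [frobenius_norm_eq_norm_toLp, PiLp.norm_sq_eq_of_L2]

theorem frobInner_eq_inner (A B : Matrix α β ℝ) :
    frobInner A B = inner ℝ (toLp 2 fun i => toLp 2 (A i)) (toLp 2 fun i => toLp 2 (B i)) := by
  simp [frobInner, PiLp.inner_apply, mul_comm]

theorem frobInner_self (A : Matrix α β ℝ) : frobInner A A = ‖A‖ ^ 2 := by
  rw [frobInner_eq_inner, frobenius_norm_eq_norm_toLp, real_inner_self_eq_norm_sq]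

theorem abs_frobInner_le (A B : Matrix α β ℝ) : |frobInner A B| ≤ ‖A‖ * ‖B‖ := by
  rw [frobInner_eq_inner]
  exact abs_real_inner_le_norm _ _

theorem frobNorm_eq_norm (A : Matrix α β ℝ) : frobNorm A = ‖A‖ := by
  rw [frobNorm, frobInner_self, Real.sqrt_sq (norm_nonneg A)]

theorem frobInner_sub_left (A B C : Matrix α β ℝ) :
    frobInner (A - B) C = frobInner A C - frobInner B C := by
  simp [frobInner, sub_mul]

theorem frobInner_sub_right (A B C : Matrix α β ℝ) :
    frobInner A (B - C) = frobInner A B - frobInner A C := by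
  simp [frobInner, mul_sub]

theorem frobInner_transpose (A B : Matrix α β ℝ) : frobInner Aᵀ Bᵀ = frobInner A B := by
  simpa [frobInner] using Finset.sum_comm

end Frobenius

section Adjoint

variable {l m r : Type*} [Fintype l] [Fintype m] [Fintype r]

theorem frobInner_mul_transpose_right (G : Matrix l m ℝ) (W : Matrix l r ℝ) (B : Matrix m r ℝ) :
    frobInner G (W * Bᵀ) = frobInner (G * B) W := by
  simp only [frobInner, Matrix.mul_apply, Matrix.transpose_apply, Finset.mul_sum, Finset.sum_mul]
  refine Finset.sum_congr rfl fun i _ => ?_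
  rw [Finset.sum_comm]
  exact Finset.sum_congr rfl fun j _ => Finset.sum_congr rfl fun k _ => by ring

theorem frobInner_mul_transpose_left (G : Matrix l m ℝ) (A : Matrix l r ℝ) (W : Matrix m r ℝ) :
    frobInner G (A * Wᵀ) = frobInner (Gᵀ * A) W := by
  rw [← frobInner_transpose, Matrix.transpose_mul, Matrix.transpose_transpose,
    frobInner_mul_transpose_right]

end Adjoint

section SpectralNorm

variable {m r : ℕ}

theorem specNorm_zero : specNorm (0 : Matrix (Fin m) (Fin r) ℝ) = 0 := by
  simp [specNorm]

theorem norm_toLp_mulVec_le (V : Matrix (Fin m) (Fin r) ℝ) (x : Fin r → ℝ) :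
    ‖toLp 2 (V *ᵥ x)‖ ≤ specNorm V * ‖toLp 2 x‖ :=
  (LinearMap.toContinuousLinearMap (Matrix.toEuclideanLin V)).le_opNorm (toLp 2 x)

theorem norm_mul_transpose_sq_le {α : Type*} [Fintype α] (W : Matrix α (Fin r) ℝ)
    (V : Matrix (Fin m) (Fin r) ℝ) : ‖W * Vᵀ‖ ^ 2 ≤ specNorm V ^ 2 * ‖W‖ ^ 2 := by
  have hrow : ∀ i, (W * Vᵀ) i = V *ᵥ W i := fun i => by
    ext j
    simp [Matrix.mul_apply, Matrix.mulVec, dotProduct, mul_comm]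
  rw [frobenius_norm_sq_eq_sum_norm_sq_row, frobenius_norm_sq_eq_sum_norm_sq_row, Finset.mul_sum]
  refine Finset.sum_le_sum fun i _ => ?_
  rw [hrow, ← mul_pow]
  exact pow_le_pow_left₀ (norm_nonneg _) (norm_toLp_mulVec_le V (W i)) 2

theorem mul_norm_mul_transpose_sq_le {n : ℕ} {L : ℝ} (hL : 0 ≤ L ∨ n = 0 ∨ m = 0)
    (W : Matrix (Fin n) (Fin r) ℝ) (V : Matrix (Fin m) (Fin r) ℝ) :
    L * ‖W * Vᵀ‖ ^ 2 ≤ L * specNorm V ^ 2 * ‖W‖ ^ 2 := by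
  rcases hL with hL | rfl | rfl
  · rw [mul_assoc]
    exact mul_le_mul_of_nonneg_left (norm_mul_transpose_sq_le W V) hL
  · simp [Subsingleton.elim W 0]
  · simp [Subsingleton.elim V 0, specNorm_zero]

end SpectralNorm

theorem nonneg_of_norm_sub_le_mul_norm_sub {E F : Type*} [NormedAddCommGroup E] [Nontrivial E]
    [SeminormedAddCommGroup F] {g : E → F} {L : ℝ} (h : ∀ x y, ‖g x - g y‖ ≤ L * ‖x - y‖) :
    0 ≤ L := by
  obtain ⟨x, y, hxy⟩ := exists_pair_ne E
  exact nonneg_of_mul_nonneg_left ((norm_nonneg _).trans (h x y))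
    (norm_pos_iff.2 (sub_ne_zero.2 hxy))

theorem nonneg_or_eq_zero_or_eq_zero_of_lipschitz {n m : ℕ} {E : Type*}
    [SeminormedAddCommGroup E] {g : Matrix (Fin n) (Fin m) ℝ → E} {L : ℝ}
    (h : ∀ X Y, ‖g X - g Y‖ ≤ L * ‖X - Y‖) : 0 ≤ L ∨ n = 0 ∨ m = 0 := by
  rcases eq_or_ne n 0 with hn | hn
  · exact Or.inr (Or.inl hn)
  rcases eq_or_ne m 0 with hm | hm
  · exact Or.inr (Or.inr hm)
  have : NeZero n := ⟨hn⟩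
  have : NeZero m := ⟨hm⟩
  exact Or.inl (nonneg_of_norm_sub_le_mul_norm_sub h)

section Descent

variable {E : Type*} [NormedAddCommGroup E] [NormedSpace ℝ E] {f : E → ℝ}
  {f' : E → E →L[ℝ] ℝ} {L : ℝ}

theorem sub_sub_le_of_fderiv_sub_le (hf : ∀ x, HasFDerivAt f (f' x) x)
    (hL : ∀ x y h, f' x h - f' y h ≤ L * ‖x - y‖ * ‖h‖) (x w : E) :
    f (x + w) - f x - f' x w ≤ L / 2 * ‖w‖ ^ 2 := by
  set φ : ℝ → ℝ := fun t => f (x + t • w) - t * f' x w - L / 2 * t ^ 2 * ‖w‖ ^ 2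
  have hφ : ∀ t, HasDerivAt φ (f' (x + t • w) w - f' x w - L * t * ‖w‖ ^ 2) t := by
    intro t
    have hline : HasDerivAt (fun s : ℝ => x + s • w) w t := by
      simpa using ((hasDerivAt_id t).smul_const w).const_add x
    have := (((hf _).comp_hasDerivAt t hline).sub ((hasDerivAt_id t).mul_const (f' x w))).sub
      (((hasDerivAt_pow 2 t).const_mul (L / 2)).mul_const (‖w‖ ^ 2))
    exact this.congr_deriv
      (by simp only [Nat.cast_ofNat, Nat.add_one_sub_one, pow_one, one_mul]; ring)
  -- `hL` at `(x + t • w, x)` makes `φ` nonincreasing on `[0, ∞)`, so `φ 1 ≤ φ 0`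
  have hφ_nonpos : ∀ t ∈ interior (Set.Ici (0 : ℝ)),
      f' (x + t • w) w - f' x w - L * t * ‖w‖ ^ 2 ≤ 0 := by
    intro t ht
    rw [interior_Ici] at ht
    have := hL (x + t • w) x w
    rw [add_sub_cancel_left, norm_smul, Real.norm_of_nonneg (le_of_lt ht)] at this
    linarith
  have hanti := antitoneOn_of_hasDerivWithinAt_nonpos (convex_Ici 0)
    (fun t _ => (hφ t).continuousAt.continuousWithinAt) (fun t _ => (hφ t).hasDerivWithinAt)
    hφ_nonpos
  have := hanti Set.self_mem_Ici (by norm_num : (1 : ℝ) ∈ Set.Ici 0) zero_le_one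
  norm_num [φ] at this
  linarith

theorem abs_sub_sub_le_of_fderiv_sub_le (hf : ∀ x, HasFDerivAt f (f' x) x)
    (hL : ∀ x y h, f' x h - f' y h ≤ L * ‖x - y‖ * ‖h‖) (x w : E) :
    |f (x + w) - f x - f' x w| ≤ L / 2 * ‖w‖ ^ 2 := by
  refine abs_le.2 ⟨?_, sub_sub_le_of_fderiv_sub_le hf hL x w⟩
  have hneg := sub_sub_le_of_fderiv_sub_le (f := -f) (f' := -f') (L := L)
    (fun x => (hf x).neg) (fun x y h => by
      simp only [Pi.neg_apply, _root_.neg_apply, norm_sub_rev x y]; linarith [hL y x h]) x w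
  simp only [Pi.neg_apply, _root_.neg_apply] at hneg
  linarith

end Descent

section BlockDescent

variable {n m r : ℕ} {f : Matrix (Fin n) (Fin m) ℝ → ℝ}
  {f' : Matrix (Fin n) (Fin m) ℝ → Matrix (Fin n) (Fin m) ℝ} {L : ℝ}

theorem abs_sub_sub_frobInner_le (hdiff : Differentiable ℝ f)
    (hgrad : ∀ X H, fderiv ℝ f X H = frobInner (f' X) H)
    (hlip : ∀ X Y, ‖f' X - f' Y‖ ≤ L * ‖X - Y‖) (X W : Matrix (Fin n) (Fin m) ℝ) :
    |f (X + W) - f X - frobInner (f' X) W| ≤ L / 2 * ‖W‖ ^ 2 := by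
  have key := abs_sub_sub_le_of_fderiv_sub_le (f' := fderiv ℝ f) (L := L)
    (fun X => (hdiff X).hasFDerivAt) (fun X Y H => ?_) X W
  · convert key using 3
    exact (hgrad X W).symm
  calc fderiv ℝ f X H - fderiv ℝ f Y H = frobInner (f' X - f' Y) H := by
        rw [frobInner_sub_left, hgrad, hgrad]
    _ ≤ ‖f' X - f' Y‖ * ‖H‖ := (le_abs_self _).trans (abs_frobInner_le _ _)
    _ ≤ L * ‖X - Y‖ * ‖H‖ := mul_le_mul_of_nonneg_right (hlip X Y) (norm_nonneg H)

theorem abs_sub_sub_frobInner_le_left_factor (hdiff : Differentiable ℝ f)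
    (hgrad : ∀ X H, fderiv ℝ f X H = frobInner (f' X) H)
    (hlip : ∀ X Y, ‖f' X - f' Y‖ ≤ L * ‖X - Y‖)
    (V : Matrix (Fin m) (Fin r) ℝ) (U₀ U : Matrix (Fin n) (Fin r) ℝ) :
    |f (U * Vᵀ) - f (U₀ * Vᵀ) -
        (frobInner (f' (U₀ * Vᵀ) * V) U - frobInner (f' (U₀ * Vᵀ) * V) U₀)|
      ≤ L * specNorm V ^ 2 / 2 * ‖U - U₀‖ ^ 2 := by
  have key := abs_sub_sub_frobInner_le hdiff hgrad hlip (U₀ * Vᵀ) ((U - U₀) * Vᵀ)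
  rw [← Matrix.add_mul, add_sub_cancel, frobInner_mul_transpose_right,
    frobInner_sub_right] at key
  have := mul_norm_mul_transpose_sq_le (nonneg_or_eq_zero_or_eq_zero_of_lipschitz hlip) (U - U₀) V
  linarith

theorem abs_sub_sub_frobInner_le_right_factor (hdiff : Differentiable ℝ f)
    (hgrad : ∀ X H, fderiv ℝ f X H = frobInner (f' X) H)
    (hlip : ∀ X Y, ‖f' X - f' Y‖ ≤ L * ‖X - Y‖)
    (U : Matrix (Fin n) (Fin r) ℝ) (V₀ V : Matrix (Fin m) (Fin r) ℝ) :
    |f (U * Vᵀ) - f (U * V₀ᵀ) -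
        (frobInner ((f' (U * V₀ᵀ))ᵀ * U) V - frobInner ((f' (U * V₀ᵀ))ᵀ * U) V₀)|
      ≤ L * specNorm U ^ 2 / 2 * ‖V - V₀‖ ^ 2 := by
  have key := abs_sub_sub_frobInner_le hdiff hgrad hlip (U * V₀ᵀ) (U * (V - V₀)ᵀ)
  rw [← Matrix.mul_add, ← Matrix.transpose_add, add_sub_cancel, frobInner_mul_transpose_left,
    frobInner_sub_right, ← frobenius_norm_transpose, Matrix.transpose_mul,
    Matrix.transpose_transpose] at key
  have := mul_norm_mul_transpose_sq_le
    ((nonneg_or_eq_zero_or_eq_zero_of_lipschitz hlip).imp_right Or.symm) (V - V₀) U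
  linarith

end BlockDescent

theorem mul_norm_sq_le_norm_sub_sq_add {E : Type*} [SeminormedAddCommGroup E] {ρ : ℝ}
    (hρ : ρ < 1) (a b : E) : ρ * ‖a‖ ^ 2 ≤ ‖a - b‖ ^ 2 + ρ / (1 - ρ) * ‖b‖ ^ 2 := by
  have h1ρ : 0 < 1 - ρ := sub_pos.2 hρ
  have hsq : (‖a‖ - ‖b‖) ^ 2 ≤ ‖a - b‖ ^ 2 :=
    sq_le_sq.2 ((abs_norm_sub_norm_le a b).trans_eq (abs_norm _).symm)
  -- the gap is a square
  have hgap : ρ * ‖a‖ ^ 2 + ((1 - ρ) * ‖a‖ - ‖b‖) ^ 2 / (1 - ρ) =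
      (‖a‖ - ‖b‖) ^ 2 + ρ / (1 - ρ) * ‖b‖ ^ 2 := by
    field_simp
    ring
  have : 0 ≤ ((1 - ρ) * ‖a‖ - ‖b‖) ^ 2 / (1 - ρ) := by positivity
  linarith

theorem proxLinear_extrapolated_step_le {E : Type*} [SeminormedAddCommGroup E] [NormedSpace ℝ E]
    {g ℓ ψ : E → ℝ} {τ γ ρ β : ℝ} {x₀ x₁ y x₂ : E} (hγ : τ ≤ γ) (hρ : ρ < 1)
    (hy : y = x₁ + β • (x₁ - x₀))
    (hg : ∀ z, |g z - g y - (ℓ z - ℓ y)| ≤ τ / 2 * ‖z - y‖ ^ 2)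
    (hmin : ℓ x₂ + γ / 2 * ‖x₂ - y‖ ^ 2 + ψ x₂ ≤ ℓ x₁ + γ / 2 * ‖x₁ - y‖ ^ 2 + ψ x₁) :
    g x₂ + ψ x₂ + ρ * (γ - τ) / 2 * ‖x₂ - x₁‖ ^ 2 ≤
      g x₁ + ψ x₁ + (2 * (1 - ρ) * τ + (γ - τ)) * β ^ 2 / (2 * (1 - ρ)) * ‖x₁ - x₀‖ ^ 2 := by
  have hsmul : ‖β • (x₁ - x₀)‖ ^ 2 = β ^ 2 * ‖x₁ - x₀‖ ^ 2 := by
    rw [norm_smul, mul_pow, Real.norm_eq_abs, sq_abs]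
  have hx₁ : ‖x₁ - y‖ ^ 2 = β ^ 2 * ‖x₁ - x₀‖ ^ 2 := by
    rw [hy, sub_add_cancel_left, norm_neg, hsmul]
  have hx₂ : ρ * ‖x₂ - x₁‖ ^ 2 ≤ ‖x₂ - y‖ ^ 2 + ρ / (1 - ρ) * (β ^ 2 * ‖x₁ - x₀‖ ^ 2) := by
    have := mul_norm_sq_le_norm_sub_sq_add hρ (x₂ - x₁) (β • (x₁ - x₀))
    rwa [sub_sub, ← hy, hsmul] at this
  have hup := (abs_le.1 (hg x₂)).2
  have hlow := (abs_le.1 (hg x₁)).1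
  have hcoef : (τ + γ) / 2 * β ^ 2 + (γ - τ) / 2 * (ρ / (1 - ρ) * β ^ 2) =
      (2 * (1 - ρ) * τ + (γ - τ)) * β ^ 2 / (2 * (1 - ρ)) := by
    field_simp [(sub_pos.2 hρ).ne']
    ring
  have := mul_le_mul_of_nonneg_left hx₂ (sub_nonneg.2 hγ)
  rw [hx₁] at hlow hmin
  linarith [congrArg (· * ‖x₁ - x₀‖ ^ 2) hcoef]

theorem amm_extrapolation_descent_general {n m r : ℕ}
    (f : Matrix (Fin n) (Fin m) ℝ → ℝ) (f' : Matrix (Fin n) (Fin m) ℝ → Matrix (Fin n) (Fin m) ℝ)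
    (Lf : ℝ)
    (hdiff : Differentiable ℝ f)
    (hgrad : ∀ X H, fderiv ℝ f X H = frobInner (f' X) H)
    (hlip : ∀ X Y, frobNorm (f' X - f' Y) ≤ Lf * frobNorm (X - Y))
    (lam mu : ℝ)
    (ρ1 ρ2 : ℝ) (hρ1 : ρ1 ∈ Set.Ioo (0:ℝ) 1) (hρ2 : ρ2 ∈ Set.Ioo (0:ℝ) 1)
    (Ukm Uk Utk Uk1 : Matrix (Fin n) (Fin r) ℝ) (Vkm Vk Vtk Vk1 : Matrix (Fin m) (Fin r) ℝ)
    (βk : ℝ)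
    (hUt : Utk = Uk + βk • (Uk - Ukm)) (hVt : Vtk = Vk + βk • (Vk - Vkm))
    (τ1 γ1 : ℝ) (hτ1 : τ1 = Lf * specNorm Vk ^ 2) (hγ1 : γ1 > τ1)
    (hU : ∀ U : Matrix (Fin n) (Fin r) ℝ,
      frobInner (f' (Utk * Vkᵀ) * Vk) Uk1 + γ1 / 2 * frobInner (Uk1 - Utk) (Uk1 - Utk) +
          mu / 2 * frobInner Uk1 Uk1 + lam * (l20 Uk1 : ℝ) ≤
        frobInner (f' (Utk * Vkᵀ) * Vk) U + γ1 / 2 * frobInner (U - Utk) (U - Utk) +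
          mu / 2 * frobInner U U + lam * (l20 U : ℝ))
    (τ2 γ2 : ℝ) (hτ2 : τ2 = Lf * specNorm Uk1 ^ 2) (hγ2 : γ2 > τ2)
    (hV : ∀ V : Matrix (Fin m) (Fin r) ℝ,
      frobInner ((f' (Uk1 * Vtkᵀ))ᵀ * Uk1) Vk1 + γ2 / 2 * frobInner (Vk1 - Vtk) (Vk1 - Vtk) +
          mu / 2 * frobInner Vk1 Vk1 + lam * (l20 Vk1 : ℝ) ≤
        frobInner ((f' (Uk1 * Vtkᵀ))ᵀ * Uk1) V + γ2 / 2 * frobInner (V - Vtk) (V - Vtk) +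
          mu / 2 * frobInner V V + lam * (l20 V : ℝ))
    (α1 α2 : ℝ) (hα1 : α1 = γ1 - τ1) (hα2 : α2 = γ2 - τ2) :
    (Phi f lam mu Uk1 Vk1 + ρ1 * α1 / 2 * frobInner (Uk1 - Uk) (Uk1 - Uk) +
        ρ2 * α2 / 2 * frobInner (Vk1 - Vk) (Vk1 - Vk)) -
      (Phi f lam mu Uk Vk + ρ1 * α1 / 2 * frobInner (Uk - Ukm) (Uk - Ukm) +
        ρ2 * α2 / 2 * frobInner (Vk - Vkm) (Vk - Vkm)) ≤
      -(ρ1 * α1 / 2 - (2 * (1 - ρ1) * τ1 + α1) * βk ^ 2 / (2 * (1 - ρ1))) *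
          frobInner (Uk - Ukm) (Uk - Ukm) -
        (ρ2 * α2 / 2 - (2 * (1 - ρ2) * τ2 + α2) * βk ^ 2 / (2 * (1 - ρ2))) *
          frobInner (Vk - Vkm) (Vk - Vkm) := by
  subst hτ1 hτ2 hα1 hα2
  have hlip' : ∀ X Y, ‖f' X - f' Y‖ ≤ Lf * ‖X - Y‖ := by simpa only [frobNorm_eq_norm] using hlip
  simp only [Phi, frobInner_self] at hU hV ⊢
  have hUstep := proxLinear_extrapolated_step_le (g := fun U => f (U * Vkᵀ)) (x₂ := Uk1)
    (ℓ := frobInner (f' (Utk * Vkᵀ) * Vk)) (ψ := fun U => mu / 2 * ‖U‖ ^ 2 + lam * l20 U)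
    hγ1.le hρ1.2 hUt (abs_sub_sub_frobInner_le_left_factor hdiff hgrad hlip' Vk Utk)
    (by linarith [hU Uk])
  have hVstep := proxLinear_extrapolated_step_le (g := fun V => f (Uk1 * Vᵀ)) (x₂ := Vk1)
    (ℓ := frobInner ((f' (Uk1 * Vtkᵀ))ᵀ * Uk1)) (ψ := fun V => mu / 2 * ‖V‖ ^ 2 + lam * l20 V)
    hγ2.le hρ2.2 hVt (abs_sub_sub_frobInner_le_right_factor hdiff hgrad hlip' Uk1 Vtk)
    (by linarith [hV Vk])
  linarith

/-- the key descent inequality for one step of the alternating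
majorization-minimization method with extrapolation. -/
theorem amm_extrapolation_descent {n m r : ℕ}
    (f : Matrix (Fin n) (Fin m) ℝ → ℝ) (f' : Matrix (Fin n) (Fin m) ℝ → Matrix (Fin n) (Fin m) ℝ)
    (Lf : ℝ)
    (hdiff : Differentiable ℝ f)
    (hgrad : ∀ X H, fderiv ℝ f X H = frobInner (f' X) H)
    (hlip : ∀ X Y, frobNorm (f' X - f' Y) ≤ Lf * frobNorm (X - Y))
    (lam mu : ℝ) (hlam : 0 < lam) (hmu : 0 ≤ mu)
    (ρ1 ρ2 : ℝ) (hρ1 : ρ1 ∈ Set.Ioo (0:ℝ) 1) (hρ2 : ρ2 ∈ Set.Ioo (0:ℝ) 1)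
    (Ukm Uk Utk Uk1 : Matrix (Fin n) (Fin r) ℝ) (Vkm Vk Vtk Vk1 : Matrix (Fin m) (Fin r) ℝ)
    (βk : ℝ) (hβk : 0 ≤ βk)
    (hUt : Utk = Uk + βk • (Uk - Ukm)) (hVt : Vtk = Vk + βk • (Vk - Vkm))
    (τ1 γ1 : ℝ) (hτ1 : τ1 = Lf * specNorm Vk ^ 2) (hγ1 : γ1 > τ1)
    (hU : ∀ U : Matrix (Fin n) (Fin r) ℝ,
      frobInner (f' (Utk * Vkᵀ) * Vk) Uk1 + γ1 / 2 * frobInner (Uk1 - Utk) (Uk1 - Utk) +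
          mu / 2 * frobInner Uk1 Uk1 + lam * (l20 Uk1 : ℝ) ≤
        frobInner (f' (Utk * Vkᵀ) * Vk) U + γ1 / 2 * frobInner (U - Utk) (U - Utk) +
          mu / 2 * frobInner U U + lam * (l20 U : ℝ))
    (τ2 γ2 : ℝ) (hτ2 : τ2 = Lf * specNorm Uk1 ^ 2) (hγ2 : γ2 > τ2)
    (hV : ∀ V : Matrix (Fin m) (Fin r) ℝ,
      frobInner ((f' (Uk1 * Vtkᵀ))ᵀ * Uk1) Vk1 + γ2 / 2 * frobInner (Vk1 - Vtk) (Vk1 - Vtk) +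
          mu / 2 * frobInner Vk1 Vk1 + lam * (l20 Vk1 : ℝ) ≤
        frobInner ((f' (Uk1 * Vtkᵀ))ᵀ * Uk1) V + γ2 / 2 * frobInner (V - Vtk) (V - Vtk) +
          mu / 2 * frobInner V V + lam * (l20 V : ℝ))
    (α1 α2 : ℝ) (hα1 : α1 = γ1 - τ1) (hα2 : α2 = γ2 - τ2) :
    (Phi f lam mu Uk1 Vk1 + ρ1 * α1 / 2 * frobInner (Uk1 - Uk) (Uk1 - Uk) +
        ρ2 * α2 / 2 * frobInner (Vk1 - Vk) (Vk1 - Vk)) -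
      (Phi f lam mu Uk Vk + ρ1 * α1 / 2 * frobInner (Uk - Ukm) (Uk - Ukm) +
        ρ2 * α2 / 2 * frobInner (Vk - Vkm) (Vk - Vkm)) ≤
      -(ρ1 * α1 / 2 - (2 * (1 - ρ1) * τ1 + α1) * βk ^ 2 / (2 * (1 - ρ1))) *
          frobInner (Uk - Ukm) (Uk - Ukm) -
        (ρ2 * α2 / 2 - (2 * (1 - ρ2) * τ2 + α2) * βk ^ 2 / (2 * (1 - ρ2))) *
          frobInner (Vk - Vkm) (Vk - Vkm) :=
  amm_extrapolation_descent_general f f' Lf hdiff hgrad hlip lam mu ρ1 ρ2 hρ1 hρ2 Ukm Uk Utk Uk1 Vkm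
    Vk Vtk Vk1 βk hUt hVt τ1 γ1 hτ1 hγ1 hU τ2 γ2 hτ2 hγ2 hV α1 α2 hα1 hα2
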